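/- arXiv:1111.0487 — 7 statements merged into one kernel-verified Lean document; each statement's English description precedes it below -/
import Mathlib

section
/- For every t ∈ [0, 1) and every s ∈ (−δ, δ), the 'negative areal velocity' of the curve C_t is strictly positive: x_t'(s)·y_t(s) − x_t(s)·y_t'(s) > 0. (This is the non-integrability condition making α|M_t³ a positive contact form on M_t³ \ Γ for 0 ≤ t < 1.) -/
/-- For `0 ≤ t < 1` and `s ∈ (-δ, δ)`, the negative areal velocity of the curve
`C_t : s ↦ (x_t s, y_t s)`, where `x_t s = φ_t (u s)`, `y_t s = φ_t (-u s)` and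
`φ_t = (1-t)·φ₀ + t·φ₁`, is strictly positive:
`x_t' s · y_t s - x_t s · y_t' s > 0`. -/
theorem areal_velocity_pos_of_lt_one
    (δ : ℝ) (hδ : 0 < δ) (hδπ : δ < Real.pi)
    (φ₁ : ℝ → ℝ) (hφ₁ : ContDiff ℝ (⊤ : ℕ∞) φ₁)
    (hφ₁0 : ∀ v : ℝ, v ≤ 0 → φ₁ v = 0)
    (hφ₁' : ∀ v : ℝ, 0 < v → v ≤ 1 → 0 < deriv φ₁ v)
    (hφ₁eq : ∀ v : ℝ, 1/2 ≤ v → v ≤ 1 → φ₁ v = (1 + v) / 2)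
    (u : ℝ → ℝ) (hu : ContDiffOn ℝ (⊤ : ℕ∞) u (Set.Ioo (-δ) δ))
    (huodd : ∀ s ∈ Set.Ioo (-δ) δ, u (-s) = -u s)
    (hubij : Set.BijOn u (Set.Ioo (-δ) δ) (Set.Ioo (-1 : ℝ) 1))
    (hu' : ∀ s ∈ Set.Ioo (-δ) δ, 0 < deriv u s)
    (φ₀ : ℝ → ℝ) (hφ₀ : ∀ v : ℝ, φ₀ v = (1 + v) / 2)
    (t : ℝ) (ht : t ∈ Set.Ico (0 : ℝ) 1)
    (xt yt : ℝ → ℝ)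
    (hxt : ∀ s : ℝ, xt s = (1 - t) * φ₀ (u s) + t * φ₁ (u s))
    (hyt : ∀ s : ℝ, yt s = (1 - t) * φ₀ (-u s) + t * φ₁ (-u s))
    (s : ℝ) (hs : s ∈ Set.Ioo (-δ) δ) :
    0 < deriv xt s * yt s - xt s * deriv yt s := by
  obtain ⟨ht0, ht1⟩ := ht
  have hφ₁diff : Differentiable ℝ φ₁ := hφ₁.differentiable (by simp)
  -- the derivative of φ₁ is nonnegative for all w ≤ 1
  have hderiv_nonneg : ∀ w : ℝ, w ≤ 1 → 0 ≤ deriv φ₁ w := by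
    intro w hw
    rcases lt_trichotomy w 0 with h | h | h
    · have heq : φ₁ =ᶠ[nhds w] fun _ => (0 : ℝ) := by
        filter_upwards [Iio_mem_nhds h] with x hx using hφ₁0 x (le_of_lt hx)
      rw [heq.deriv_eq]
      simp
    · subst h
      have h1 : HasDerivWithinAt φ₁ (deriv φ₁ 0) (Set.Iic 0) 0 :=
        ((hφ₁diff 0).hasDerivAt).hasDerivWithinAt
      have h2 : HasDerivWithinAt (fun _ : ℝ => (0 : ℝ)) (deriv φ₁ 0) (Set.Iic 0) 0 :=
        h1.congr (fun x hx => (hφ₁0 x hx).symm) ((hφ₁0 0 le_rfl).symm)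
      have huniq : UniqueDiffWithinAt ℝ (Set.Iic (0:ℝ)) 0 := uniqueDiffOn_Iic 0 0 (by simp)
      have h3 := h2.derivWithin huniq
      have h4 := (hasDerivWithinAt_const (0:ℝ) (Set.Iic (0:ℝ)) (0:ℝ)).derivWithin huniq
      rw [← h3, h4]
    · exact le_of_lt (hφ₁' w h hw)
  -- φ₁ is nonnegative for all w ≤ 1
  have hφ₁nonneg : ∀ w : ℝ, w ≤ 1 → 0 ≤ φ₁ w := by
    intro w hw
    rcases le_or_gt w 0 with h | h
    · rw [hφ₁0 w h]
    · have mono : MonotoneOn φ₁ (Set.Icc 0 w) := by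
        apply monotoneOn_of_deriv_nonneg (convex_Icc 0 w) hφ₁.continuous.continuousOn
          (hφ₁diff.differentiableOn)
        intro x hx
        rw [interior_Icc] at hx
        exact hderiv_nonneg x (hx.2.le.trans hw)
      have h0 := mono (Set.left_mem_Icc.2 h.le) (Set.right_mem_Icc.2 h.le) h.le
      rwa [hφ₁0 0 le_rfl] at h0
  set v : ℝ := u s with hv
  have hvmem : v ∈ Set.Ioo (-1 : ℝ) 1 := hubij.mapsTo hs
  have hus : HasDerivAt u (deriv u s) s := by
    have hd : DifferentiableAt ℝ u s :=
      ((hu.contDiffAt (Ioo_mem_nhds hs.1 hs.2)).differentiableAt (by simp))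
    exact hd.hasDerivAt
  set u' : ℝ := deriv u s with hu'def
  have hu'pos : 0 < u' := hu' s hs
  have hxfun : xt = fun r => (1 - t) * ((1 + u r) / 2) + t * φ₁ (u r) :=
    funext fun r => by rw [hxt, hφ₀]
  have hyfun : yt = fun r => (1 - t) * ((1 + -u r) / 2) + t * φ₁ (-u r) :=
    funext fun r => by rw [hyt, hφ₀]
  have hdx : HasDerivAt xt ((1 - t) * (u' / 2) + t * (deriv φ₁ v * u')) s := by
    rw [hxfun]
    exact (((hus.const_add 1).div_const 2).const_mul (1 - t)).add
      ((((hφ₁diff v).hasDerivAt).comp s hus).const_mul t)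
  have hdy : HasDerivAt yt ((1 - t) * (-u' / 2) + t * (deriv φ₁ (-v) * -u')) s := by
    rw [hyfun]
    exact ((((hus.neg).const_add 1).div_const 2).const_mul (1 - t)).add
      ((((hφ₁diff (-v)).hasDerivAt).comp s hus.neg).const_mul t)
  rw [hdx.deriv, hdy.deriv, hxt s, hyt s, hφ₀, hφ₀]
  set D₁ : ℝ := deriv φ₁ v
  set D₂ : ℝ := deriv φ₁ (-v)
  have hA : 0 < (1 - t) * ((1 + v) / 2) + t * φ₁ v := by
    have h1 : 0 < (1 - t) * ((1 + v) / 2) := by nlinarith [hvmem.1]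
    have h2 : 0 ≤ t * φ₁ v := mul_nonneg ht0 (hφ₁nonneg v hvmem.2.le)
    linarith
  have hB : 0 < (1 - t) * ((1 + -v) / 2) + t * φ₁ (-v) := by
    have h1 : 0 < (1 - t) * ((1 + -v) / 2) := by nlinarith [hvmem.2]
    have h2 : 0 ≤ t * φ₁ (-v) := mul_nonneg ht0 (hφ₁nonneg (-v) (by linarith [hvmem.1]))
    linarith
  have hA' : 0 < (1 - t) / 2 + t * D₁ := by
    have h2 : 0 ≤ t * D₁ := mul_nonneg ht0 (hderiv_nonneg v hvmem.2.le)
    linarith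
  have hB' : 0 < (1 - t) / 2 + t * D₂ := by
    have h2 : 0 ≤ t * D₂ := mul_nonneg ht0 (hderiv_nonneg (-v) (by linarith [hvmem.1]))
    linarith
  have key : ((1 - t) * (u' / 2) + t * (D₁ * u')) * ((1 - t) * ((1 + -v) / 2) + t * φ₁ (-v)) -
      ((1 - t) * ((1 + v) / 2) + t * φ₁ v) * ((1 - t) * (-u' / 2) + t * (D₂ * -u')) =
      u' * (((1 - t) / 2 + t * D₁) * ((1 - t) * ((1 + -v) / 2) + t * φ₁ (-v)) +
        ((1 - t) * ((1 + v) / 2) + t * φ₁ v) * ((1 - t) / 2 + t * D₂)) := by ring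
  rw [key]
  positivity
end

section
/- For every t ∈ [0, 1) and every s ∈ (−δ, δ), x_t'(s) − y_t'(s) > 0. (This inequality, equivalent to d(θ₁+θ₂) ∧ dλ_t > 0, shows that the positive Hopf band is a supporting open-book for the contact submanifold M_t³ for 0 ≤ t < 1.) -/
lemma deriv_phi_zero_of_nonpos (φ₁ : ℝ → ℝ) (hφ₁ : ContDiff ℝ (⊤ : ℕ∞) φ₁)
    (hφ₁0 : ∀ v : ℝ, v ≤ 0 → φ₁ v = 0) : ∀ v : ℝ, v ≤ 0 → deriv φ₁ v = 0 := by
  intro v hv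
  have hd : HasDerivAt φ₁ (deriv φ₁ v) v := (hφ₁.differentiable (by norm_num) v).hasDerivAt
  have h0 : HasDerivWithinAt φ₁ (deriv φ₁ v) (Set.Iio 0) v := hd.hasDerivWithinAt
  have hz : HasDerivWithinAt φ₁ 0 (Set.Iio 0) v := by
    have hc : HasDerivWithinAt (fun _ : ℝ => (0:ℝ)) 0 (Set.Iio 0) v :=
      (hasDerivAt_const v 0).hasDerivWithinAt
    exact hc.congr (fun x hx => hφ₁0 x hx.le) (hφ₁0 v hv)
  have hud : UniqueDiffWithinAt ℝ (Set.Iio (0:ℝ)) v := by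
    apply uniqueDiffWithinAt_convex (convex_Iio (0:ℝ))
    · simp [interior_Iio]
    · simpa [closure_Iio] using hv
  have := h0.derivWithin hud
  have := hz.derivWithin hud
  linarith

/-- For `0 ≤ t < 1` and `s ∈ (-δ, δ)`, one has `x_t' s - y_t' s > 0`; this is the
open-book condition `d(θ₁+θ₂) ∧ dλ_t > 0` showing the positive Hopf band supports
the contact submanifold `M_t³`. -/
theorem deriv_x_sub_deriv_y_pos
    (δ : ℝ) (hδ : 0 < δ) (hδπ : δ < Real.pi)
    (φ₁ : ℝ → ℝ) (hφ₁ : ContDiff ℝ (⊤ : ℕ∞) φ₁)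
    (hφ₁0 : ∀ v : ℝ, v ≤ 0 → φ₁ v = 0)
    (hφ₁' : ∀ v : ℝ, 0 < v → v ≤ 1 → 0 < deriv φ₁ v)
    (hφ₁eq : ∀ v : ℝ, 1/2 ≤ v → v ≤ 1 → φ₁ v = (1 + v) / 2)
    (u : ℝ → ℝ) (hu : ContDiffOn ℝ (⊤ : ℕ∞) u (Set.Ioo (-δ) δ))
    (huodd : ∀ s ∈ Set.Ioo (-δ) δ, u (-s) = -u s)
    (hubij : Set.BijOn u (Set.Ioo (-δ) δ) (Set.Ioo (-1 : ℝ) 1))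
    (hu' : ∀ s ∈ Set.Ioo (-δ) δ, 0 < deriv u s)
    (φ₀ : ℝ → ℝ) (hφ₀ : ∀ v : ℝ, φ₀ v = (1 + v) / 2)
    (t : ℝ) (ht : t ∈ Set.Ico (0 : ℝ) 1)
    (xt yt : ℝ → ℝ)
    (hxt : ∀ s : ℝ, xt s = (1 - t) * φ₀ (u s) + t * φ₁ (u s))
    (hyt : ∀ s : ℝ, yt s = (1 - t) * φ₀ (-u s) + t * φ₁ (-u s))
    (s : ℝ) (hs : s ∈ Set.Ioo (-δ) δ) :
    0 < deriv xt s - deriv yt s := by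
  obtain ⟨ht0, ht1⟩ := ht
  have hφ₁diff : Differentiable ℝ φ₁ := hφ₁.differentiable (by norm_num)
  set d := deriv u s with hdud
  have hd : HasDerivAt u d s :=
    ((hu.contDiffAt (isOpen_Ioo.mem_nhds hs)).differentiableAt (by norm_num)).hasDerivAt
  have hdpos : 0 < d := hu' s hs
  have hrange : u s ∈ Set.Ioo (-1 : ℝ) 1 := hubij.mapsTo hs
  set A := deriv φ₁ (u s) with hA
  set B := deriv φ₁ (-u s) with hB
  have hx : HasDerivAt xt ((1 - t) * (d / 2) + t * (A * d)) s := by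
    have h1 : HasDerivAt (fun r => (1 - t) * ((1 + u r) / 2)) ((1 - t) * (d / 2)) s := by
      have := (((hasDerivAt_const s (1:ℝ)).add hd).div_const 2).const_mul (1 - t)
      simpa using this
    have h2 : HasDerivAt (fun r => t * φ₁ (u r)) (t * (A * d)) s := by
      have := (((hφ₁diff (u s)).hasDerivAt).comp s hd).const_mul t
      simpa [Function.comp] using this
    have h3 := h1.add h2
    apply h3.congr_of_eventuallyEq
    filter_upwards with r
    rw [hxt r, hφ₀]; rfl
  have hy : HasDerivAt yt ((1 - t) * (-d / 2) + t * (B * (-d))) s := by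
    have h1 : HasDerivAt (fun r => (1 - t) * ((1 + -u r) / 2)) ((1 - t) * (-d / 2)) s := by
      have := (((hasDerivAt_const s (1:ℝ)).add hd.neg).div_const 2).const_mul (1 - t)
      simpa using this
    have h2 : HasDerivAt (fun r => t * φ₁ (-u r)) (t * (B * (-d))) s := by
      have := (((hφ₁diff (-u s)).hasDerivAt).comp s hd.neg).const_mul t
      simpa [Function.comp] using this
    have h3 := h1.add h2
    apply h3.congr_of_eventuallyEq
    filter_upwards with r
    rw [hyt r, hφ₀]; rfl
  rw [hx.deriv, hy.deriv]
  have hABnn : 0 ≤ A + B := by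
    rcases lt_trichotomy (u s) 0 with h | h | h
    · have hA0 : A = 0 := deriv_phi_zero_of_nonpos φ₁ hφ₁ hφ₁0 _ h.le
      have hB0 : 0 < B := hφ₁' (-u s) (by linarith) (by linarith [hrange.1])
      linarith
    · have hA0 : A = 0 := deriv_phi_zero_of_nonpos φ₁ hφ₁ hφ₁0 _ h.le
      have hB0 : B = 0 := deriv_phi_zero_of_nonpos φ₁ hφ₁ hφ₁0 _ (by rw [h]; norm_num)
      linarith
    · have hA0 : 0 < A := hφ₁' (u s) h hrange.2.le
      have hB0 : B = 0 := deriv_phi_zero_of_nonpos φ₁ hφ₁ hφ₁0 _ (by linarith)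
      linarith
  nlinarith [mul_nonneg (mul_nonneg ht0 hABnn) hdpos.le]
end

section
/- For every t ∈ (0, 1] and every s ∈ (−δ, δ), the point of the moment simplex determined by the curve C_t lies in the open 2-simplex: all three numbers (1 + 2x_t(s) − y_t(s))/3, (1 − x_t(s) + 2y_t(s))/3, and (1 − x_t(s) − y_t(s))/3 are strictly positive (and they sum to 1). In particular, for t > 0 the interior part of M_t³ lies in the region of S⁵ where all three coordinates z₁, z₂, z₃ are nonzero. -/
/-- For `0 < t ≤ 1` and `s ∈ (-δ, δ)`, the point of the moment simplex determined by
the curve `C_t` lies in the open `2`-simplex: the three numbers `(1 + 2x_t s - y_t s)/3`,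
`(1 - x_t s + 2y_t s)/3`, `(1 - x_t s - y_t s)/3` are strictly positive and sum to `1`. -/
theorem curve_in_open_simplex
    (δ : ℝ) (hδ : 0 < δ) (hδπ : δ < Real.pi)
    (φ₁ : ℝ → ℝ) (hφ₁ : ContDiff ℝ (⊤ : ℕ∞) φ₁)
    (hφ₁0 : ∀ v : ℝ, v ≤ 0 → φ₁ v = 0)
    (hφ₁' : ∀ v : ℝ, 0 < v → v ≤ 1 → 0 < deriv φ₁ v)
    (hφ₁eq : ∀ v : ℝ, 1/2 ≤ v → v ≤ 1 → φ₁ v = (1 + v) / 2)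
    (u : ℝ → ℝ) (hu : ContDiffOn ℝ (⊤ : ℕ∞) u (Set.Ioo (-δ) δ))
    (huodd : ∀ s ∈ Set.Ioo (-δ) δ, u (-s) = -u s)
    (hubij : Set.BijOn u (Set.Ioo (-δ) δ) (Set.Ioo (-1 : ℝ) 1))
    (hu' : ∀ s ∈ Set.Ioo (-δ) δ, 0 < deriv u s)
    (φ₀ : ℝ → ℝ) (hφ₀ : ∀ v : ℝ, φ₀ v = (1 + v) / 2)
    (t : ℝ) (ht : t ∈ Set.Ioc (0 : ℝ) 1)
    (xt yt : ℝ → ℝ)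
    (hxt : ∀ s : ℝ, xt s = (1 - t) * φ₀ (u s) + t * φ₁ (u s))
    (hyt : ∀ s : ℝ, yt s = (1 - t) * φ₀ (-u s) + t * φ₁ (-u s))
    (s : ℝ) (hs : s ∈ Set.Ioo (-δ) δ) :
    0 < (1 + 2 * xt s - yt s) / 3 ∧
    0 < (1 - xt s + 2 * yt s) / 3 ∧
    0 < (1 - xt s - yt s) / 3 ∧
    (1 + 2 * xt s - yt s) / 3 + (1 - xt s + 2 * yt s) / 3 + (1 - xt s - yt s) / 3 = 1 := by
  obtain ⟨ht0, ht1⟩ := ht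
  have hv := hubij.mapsTo hs
  obtain ⟨hv1, hv2⟩ : -1 < u s ∧ u s < 1 := hv
  -- strict monotonicity of φ₁ on [0,1]
  have hmono : StrictMonoOn φ₁ (Set.Icc (0:ℝ) 1) := by
    apply strictMonoOn_of_deriv_pos (convex_Icc 0 1) hφ₁.continuous.continuousOn
    intro x hx
    rw [interior_Icc] at hx
    exact hφ₁' x hx.1 hx.2.le
  have hφ₁1 : φ₁ 1 = 1 := by rw [hφ₁eq 1 (by norm_num) le_rfl]; norm_num
  have key : ∀ w : ℝ, -1 < w → w < 1 → 0 ≤ φ₁ w ∧ φ₁ w < 1 := by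
    intro w hw1 hw2
    rcases le_or_gt w 0 with h | h
    · rw [hφ₁0 w h]; norm_num
    · constructor
      · have := hmono (by simp : (0:ℝ) ∈ Set.Icc (0:ℝ) 1)
          ⟨h.le, hw2.le⟩ h
        rw [hφ₁0 0 le_rfl] at this
        exact this.le
      · have := hmono ⟨h.le, hw2.le⟩ (by simp : (1:ℝ) ∈ Set.Icc (0:ℝ) 1) hw2
        rwa [hφ₁1] at this
  obtain ⟨ha0, ha1⟩ := key (u s) hv1 hv2
  obtain ⟨hb0, hb1⟩ := key (-u s) (by linarith) (by linarith)
  have hsum : φ₁ (u s) + φ₁ (-u s) < 1 := by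
    rcases le_or_gt (u s) 0 with h | h
    · rw [hφ₁0 (u s) h]; linarith
    · rw [hφ₁0 (-u s) (by linarith)]; linarith
  rw [hxt, hyt, hφ₀ (u s), hφ₀ (-u s)]
  have h1t : 0 ≤ 1 - t := by linarith
  have p1 : 0 ≤ (1 - t) * ((1 + u s) / 2) := mul_nonneg h1t (by linarith)
  have p2 : 0 ≤ (1 - t) * ((1 + -u s) / 2) := mul_nonneg h1t (by linarith)
  have p3 : 0 ≤ t * φ₁ (u s) := by positivity
  have p4 : 0 ≤ t * φ₁ (-u s) := by positivity
  have q1 : (1 - t) * ((1 + u s) / 2) ≤ 1 - t := by nlinarith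
  have q2 : (1 - t) * ((1 + -u s) / 2) ≤ 1 - t := by nlinarith
  have q3 : t * φ₁ (u s) < t := by nlinarith
  have q4 : t * φ₁ (-u s) < t := by nlinarith
  have q5 : t * φ₁ (u s) + t * φ₁ (-u s) < t := by nlinarith
  refine ⟨by linarith, by linarith, by nlinarith, by ring⟩
end

section
/- For every t ∈ [0, 1], the map s ↦ (x_t(s), y_t(s)) from (−δ, δ) to ℝ² is injective; that is, C_t is a simple curve. -/
/-- For every `t ∈ [0, 1]`, the map `s ↦ (x_t s, y_t s)` is injective on `(-δ, δ)`:
the curve `C_t` is simple. -/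
theorem curve_is_simple
    (δ : ℝ) (hδ : 0 < δ) (hδπ : δ < Real.pi)
    (φ₁ : ℝ → ℝ) (hφ₁ : ContDiff ℝ (⊤ : ℕ∞) φ₁)
    (hφ₁0 : ∀ v : ℝ, v ≤ 0 → φ₁ v = 0)
    (hφ₁' : ∀ v : ℝ, 0 < v → v ≤ 1 → 0 < deriv φ₁ v)
    (hφ₁eq : ∀ v : ℝ, 1/2 ≤ v → v ≤ 1 → φ₁ v = (1 + v) / 2)
    (u : ℝ → ℝ) (hu : ContDiffOn ℝ (⊤ : ℕ∞) u (Set.Ioo (-δ) δ))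
    (huodd : ∀ s ∈ Set.Ioo (-δ) δ, u (-s) = -u s)
    (hubij : Set.BijOn u (Set.Ioo (-δ) δ) (Set.Ioo (-1 : ℝ) 1))
    (hu' : ∀ s ∈ Set.Ioo (-δ) δ, 0 < deriv u s)
    (φ₀ : ℝ → ℝ) (hφ₀ : ∀ v : ℝ, φ₀ v = (1 + v) / 2)
    (t : ℝ) (ht : t ∈ Set.Icc (0 : ℝ) 1)
    (xt yt : ℝ → ℝ)
    (hxt : ∀ s : ℝ, xt s = (1 - t) * φ₀ (u s) + t * φ₁ (u s))
    (hyt : ∀ s : ℝ, yt s = (1 - t) * φ₀ (-u s) + t * φ₁ (-u s)) :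
    Set.InjOn (fun s => (xt s, yt s)) (Set.Ioo (-δ) δ) := by
  have hφ₁00 : φ₁ 0 = 0 := hφ₁0 0 le_rfl
  -- φ₁ is strictly monotone on [0,1]
  have hmono : StrictMonoOn φ₁ (Set.Icc (0 : ℝ) 1) := by
    apply strictMonoOn_of_deriv_pos (convex_Icc 0 1) hφ₁.continuous.continuousOn
    intro v hv
    rw [interior_Icc] at hv
    exact hφ₁' v hv.1 hv.2.le
  set G : ℝ → ℝ := fun v => (1 - t) * v + t * (φ₁ v - φ₁ (-v)) with hG
  -- G is strictly monotone on [-1, 1]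
  have hGmono : StrictMonoOn G (Set.Icc (-1 : ℝ) 1) := by
    intro a ha b hb hab
    have hg : φ₁ a - φ₁ (-a) < φ₁ b - φ₁ (-b) := by
      rcases le_or_gt 0 a with h0a | h0a
      · have ha0 : φ₁ (-a) = 0 := hφ₁0 _ (by linarith)
        have hb0 : φ₁ (-b) = 0 := hφ₁0 _ (by linarith)
        have := hmono ⟨h0a, ha.2⟩ ⟨by linarith, hb.2⟩ hab
        linarith
      · rcases le_or_gt b 0 with hb0 | hb0
        · have ha0 : φ₁ a = 0 := hφ₁0 _ h0a.le
          have hb0' : φ₁ b = 0 := hφ₁0 _ hb0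
          have := hmono ⟨by linarith, by linarith [ha.1]⟩
            ⟨by linarith, by linarith [ha.1]⟩ (by linarith : -b < -a)
          linarith
        · have ha0 : φ₁ a = 0 := hφ₁0 _ h0a.le
          have hnb0 : φ₁ (-b) = 0 := hφ₁0 _ (by linarith)
          have h1 := hmono ⟨le_rfl, by norm_num⟩
            ⟨by linarith, by linarith [ha.1]⟩ (by linarith : (0:ℝ) < -a)
          have h2 := hmono ⟨le_rfl, by norm_num⟩ ⟨hb0.le, hb.2⟩ hb0
          linarith
    rcases eq_or_lt_of_le ht.1 with h | h
    · simp only [hG, ← h]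
      simpa using hab
    · have h1 : (1 - t) * a ≤ (1 - t) * b :=
        mul_le_mul_of_nonneg_left hab.le (by linarith [ht.2])
      have h2 : t * (φ₁ a - φ₁ (-a)) < t * (φ₁ b - φ₁ (-b)) :=
        mul_lt_mul_of_pos_left hg h
      simp only [hG]
      linarith
  have hkey : ∀ s : ℝ, G (u s) = xt s - yt s := by
    intro s
    simp only [hG, hxt, hyt, hφ₀]
    ring
  intro s₁ hs₁ s₂ hs₂ heq
  have hx : xt s₁ = xt s₂ := congrArg Prod.fst heq
  have hy : yt s₁ = yt s₂ := congrArg Prod.snd heq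
  have hGeq : G (u s₁) = G (u s₂) := by rw [hkey, hkey, hx, hy]
  have hm₁ := hubij.mapsTo hs₁
  have hm₂ := hubij.mapsTo hs₂
  have huu : u s₁ = u s₂ :=
    hGmono.injOn ⟨hm₁.1.le, hm₁.2.le⟩ ⟨hm₂.1.le, hm₂.2.le⟩ hGeq
  exact hubij.injOn hs₁ hs₂ huu
end

section
/- Let 0 < δ < π and let ρ₁, ρ₂, ρ₃ : (−δ, δ) → ℝ be continuous functions with ρᵢ(s) > 0 and ρ₁(s)² + ρ₂(s)² + ρ₃(s)² = 1 for all s. Then the map Φ : Circle × Circle × (−δ, δ) → ℂ³ defined by Φ(w₁, w₂, s) = (ρ₁(s)·w₁, ρ₂(s)·w₂, ρ₃(s)·e^{is}·(w₁w₂)⁻¹) is a topological embedding (a homeomorphism onto its image), and its image is contained in the unit sphere S⁵ = {z ∈ ℂ³ : |z₁|² + |z₂|² + |z₃|² = 1}. (In particular, for each t the interior part M_t³ \ Γ of the deformed submanifold is homeomorphic to T² × (−δ, δ).) -/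
open Complex Set Function Topology

/-- Auxiliary open-ish region of `ℂ³` on which we can invert the wall parameterization. -/
def wallSet (δ : ℝ) : Set (Fin 3 → ℂ) :=
  {z | (z 0 ≠ 0 ∧ z 1 ≠ 0 ∧ z 2 ≠ 0) ∧ Complex.arg (z 0 * z 1 * z 2) ∈ Set.Ioo (-δ) δ}

/-- Continuous left inverse of the wall parameterization. -/
noncomputable def wallInv (δ : ℝ) (z : wallSet δ) : Circle × Circle × Set.Ioo (-δ) δ :=
  (⟨z.1 0 / (‖z.1 0‖ : ℂ), mem_sphere_zero_iff_norm.2 <| by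
      have h0 : ‖z.1 0‖ ≠ 0 := norm_ne_zero_iff.2 z.2.1.1
      simp [norm_div, div_self, h0]⟩,
   ⟨z.1 1 / (‖z.1 1‖ : ℂ), mem_sphere_zero_iff_norm.2 <| by
      have h0 : ‖z.1 1‖ ≠ 0 := norm_ne_zero_iff.2 z.2.1.2.1
      simp [norm_div, div_self, h0]⟩,
   ⟨Complex.arg (z.1 0 * z.1 1 * z.1 2), z.2.2⟩)

lemma wallInv_continuous (δ : ℝ) (hδπ : δ ≤ Real.pi) : Continuous (wallInv δ) := by
  have h0 : Continuous (fun z : wallSet δ => z.1 0) :=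
    (continuous_apply (0 : Fin 3)).comp continuous_subtype_val
  have h1 : Continuous (fun z : wallSet δ => z.1 1) :=
    (continuous_apply (1 : Fin 3)).comp continuous_subtype_val
  have h2 : Continuous (fun z : wallSet δ => z.1 2) :=
    (continuous_apply (2 : Fin 3)).comp continuous_subtype_val
  have hc1 : Continuous fun z : wallSet δ => z.1 0 / (‖z.1 0‖ : ℂ) :=
    h0.div (Complex.continuous_ofReal.comp (continuous_norm.comp h0))
      fun z => Complex.ofReal_ne_zero.2 (norm_ne_zero_iff.2 z.2.1.1)
  have hc2 : Continuous fun z : wallSet δ => z.1 1 / (‖z.1 1‖ : ℂ) :=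
    h1.div (Complex.continuous_ofReal.comp (continuous_norm.comp h1))
      fun z => Complex.ofReal_ne_zero.2 (norm_ne_zero_iff.2 z.2.1.2.1)
  have hc3 : Continuous fun z : wallSet δ => Complex.arg (z.1 0 * z.1 1 * z.1 2) := by
    rw [continuous_iff_continuousAt]
    intro z
    refine (Complex.continuousAt_arg ?_).comp
      (((h0.continuousAt.mul h1.continuousAt).mul h2.continuousAt))
    rw [Complex.mem_slitPlane_iff_arg]
    refine ⟨fun h => ?_, mul_ne_zero (mul_ne_zero z.2.1.1 z.2.1.2.1) z.2.1.2.2⟩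
    have := z.2.2.2
    rw [h] at this
    exact absurd hδπ (not_le.2 this)
  exact (hc1.subtype_mk _).prodMk ((hc2.subtype_mk _).prodMk (hc3.subtype_mk _))

/-- For continuous positive `ρ₁, ρ₂, ρ₃` on `(-δ, δ)` with `ρ₁² + ρ₂² + ρ₃² = 1`
(`0 < δ < π`), the map `Φ(w₁, w₂, s) = (ρ₁(s)w₁, ρ₂(s)w₂, ρ₃(s)e^{is}(w₁w₂)⁻¹)` is a
topological embedding of `T² × (-δ, δ)` whose image lies in the unit sphere `S⁵`. -/
theorem wall_param_is_embedding
    (δ : ℝ) (hδ : 0 < δ) (hδπ : δ < Real.pi)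
    (ρ₁ ρ₂ ρ₃ : ℝ → ℝ)
    (hρ₁ : ContinuousOn ρ₁ (Set.Ioo (-δ) δ))
    (hρ₂ : ContinuousOn ρ₂ (Set.Ioo (-δ) δ))
    (hρ₃ : ContinuousOn ρ₃ (Set.Ioo (-δ) δ))
    (hpos : ∀ s ∈ Set.Ioo (-δ) δ, 0 < ρ₁ s ∧ 0 < ρ₂ s ∧ 0 < ρ₃ s)
    (hsum : ∀ s ∈ Set.Ioo (-δ) δ, ρ₁ s ^ 2 + ρ₂ s ^ 2 + ρ₃ s ^ 2 = 1) :
    Topology.IsEmbedding (fun p : Circle × Circle × Set.Ioo (-δ) δ =>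
      (![(ρ₁ p.2.2 : ℂ) * (p.1 : ℂ), (ρ₂ p.2.2 : ℂ) * (p.2.1 : ℂ),
         (ρ₃ p.2.2 : ℂ) * Complex.exp (Complex.I * (p.2.2 : ℝ)) *
           ((p.1 : ℂ) * (p.2.1 : ℂ))⁻¹] : Fin 3 → ℂ)) ∧
    Set.range (fun p : Circle × Circle × Set.Ioo (-δ) δ =>
      (![(ρ₁ p.2.2 : ℂ) * (p.1 : ℂ), (ρ₂ p.2.2 : ℂ) * (p.2.1 : ℂ),
         (ρ₃ p.2.2 : ℂ) * Complex.exp (Complex.I * (p.2.2 : ℝ)) *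
           ((p.1 : ℂ) * (p.2.1 : ℂ))⁻¹] : Fin 3 → ℂ))
      ⊆ {z : Fin 3 → ℂ | ∑ i, ‖z i‖ ^ 2 = 1} := by
  set Φ := fun p : Circle × Circle × Set.Ioo (-δ) δ =>
      (![(ρ₁ p.2.2 : ℂ) * (p.1 : ℂ), (ρ₂ p.2.2 : ℂ) * (p.2.1 : ℂ),
         (ρ₃ p.2.2 : ℂ) * Complex.exp (Complex.I * (p.2.2 : ℝ)) *
           ((p.1 : ℂ) * (p.2.1 : ℂ))⁻¹] : Fin 3 → ℂ) with hΦ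
  -- the key argument computation
  have key : ∀ p : Circle × Circle × Set.Ioo (-δ) δ,
      Complex.arg (Φ p 0 * Φ p 1 * Φ p 2) = (p.2.2 : ℝ) := by
    rintro ⟨w₁, w₂, s, hs⟩
    have hw : (w₁ : ℂ) * w₂ ≠ 0 := mul_ne_zero w₁.coe_ne_zero w₂.coe_ne_zero
    have hr : 0 < ρ₁ s * ρ₂ s * ρ₃ s :=
      mul_pos (mul_pos (hpos s hs).1 (hpos s hs).2.1) (hpos s hs).2.2
    have hre : Φ (w₁, w₂, ⟨s, hs⟩) 0 * Φ (w₁, w₂, ⟨s, hs⟩) 1 * Φ (w₁, w₂, ⟨s, hs⟩) 2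
        = ((ρ₁ s * ρ₂ s * ρ₃ s : ℝ) : ℂ) * (Real.cos s + Real.sin s * Complex.I) := by
      simp only [hΦ, Matrix.cons_val_zero, Matrix.cons_val_one, Matrix.head_cons,
        Matrix.cons_val_two, Matrix.tail_cons]
      rw [mul_comm Complex.I (s : ℂ), Complex.exp_mul_I]
      push_cast
      field_simp
    rw [hre, Complex.arg_real_mul _ hr, Complex.ofReal_cos, Complex.ofReal_sin,
      Complex.arg_cos_add_sin_mul_I ⟨lt_of_le_of_lt (neg_le_neg hδπ.le) hs.1,
        le_of_lt (lt_trans hs.2 hδπ)⟩]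
  have hmem : ∀ p, Φ p ∈ wallSet δ := by
    rintro ⟨w₁, w₂, s, hs⟩
    refine ⟨⟨?_, ?_, ?_⟩, ?_⟩
    · simp only [hΦ, Matrix.cons_val_zero]
      exact mul_ne_zero (Complex.ofReal_ne_zero.2 (hpos s hs).1.ne') w₁.coe_ne_zero
    · simp only [hΦ, Matrix.cons_val_one, Matrix.head_cons]
      exact mul_ne_zero (Complex.ofReal_ne_zero.2 (hpos s hs).2.1.ne') w₂.coe_ne_zero
    · simp only [hΦ, Matrix.cons_val_two, Matrix.tail_cons, Matrix.head_cons]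
      exact mul_ne_zero (mul_ne_zero (Complex.ofReal_ne_zero.2 (hpos s hs).2.2.ne')
        (Complex.exp_ne_zero _)) (inv_ne_zero (mul_ne_zero w₁.coe_ne_zero w₂.coe_ne_zero))
    · show Complex.arg _ ∈ Set.Ioo (-δ) δ
      rw [key (w₁, w₂, ⟨s, hs⟩)]
      exact hs
  -- continuity of Φ
  have hcont : Continuous Φ := by
    have hsub : Continuous fun p : Circle × Circle × Set.Ioo (-δ) δ => (p.2.2 : ℝ) :=
      continuous_subtype_val.comp (continuous_snd.comp continuous_snd)
    have hr1 : Continuous fun p : Circle × Circle × Set.Ioo (-δ) δ => ρ₁ (p.2.2 : ℝ) := by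
      have := hρ₁.restrict
      exact this.comp (Continuous.subtype_mk hsub fun p => p.2.2.2)
    have hr2 : Continuous fun p : Circle × Circle × Set.Ioo (-δ) δ => ρ₂ (p.2.2 : ℝ) := by
      have := hρ₂.restrict
      exact this.comp (Continuous.subtype_mk hsub fun p => p.2.2.2)
    have hr3 : Continuous fun p : Circle × Circle × Set.Ioo (-δ) δ => ρ₃ (p.2.2 : ℝ) := by
      have := hρ₃.restrict
      exact this.comp (Continuous.subtype_mk hsub fun p => p.2.2.2)
    have hw1 : Continuous fun p : Circle × Circle × Set.Ioo (-δ) δ => (p.1 : ℂ) :=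
      continuous_subtype_val.comp continuous_fst
    have hw2 : Continuous fun p : Circle × Circle × Set.Ioo (-δ) δ => (p.2.1 : ℂ) :=
      continuous_subtype_val.comp (continuous_fst.comp continuous_snd)
    refine continuous_pi fun i => ?_
    fin_cases i
    · simp only [hΦ, Fin.zero_eta, Matrix.cons_val_zero]
      exact
        (Complex.continuous_ofReal.comp hr1).mul hw1
    · simp only [hΦ, Fin.mk_one, Matrix.cons_val_one, Matrix.cons_val_zero, Matrix.head_cons]
      exact
        (Complex.continuous_ofReal.comp hr2).mul hw2
    · simp only [hΦ, Matrix.cons_val_two, Matrix.tail_cons, Matrix.head_cons]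
      refine (((Complex.continuous_ofReal.comp hr3).mul
        (Complex.continuous_exp.comp (continuous_const.mul
          (Complex.continuous_ofReal.comp hsub)))).mul
        ((hw1.mul hw2).inv₀ fun p => mul_ne_zero p.1.coe_ne_zero p.2.1.coe_ne_zero))
  -- left inverse
  have hli : Function.LeftInverse (wallInv δ) (Set.codRestrict Φ (wallSet δ) hmem) := by
    rintro ⟨w₁, w₂, s, hs⟩
    have habs1 : ‖(ρ₁ s : ℂ) * w₁‖ = ρ₁ s := by
      rw [norm_mul, Complex.norm_real, Real.norm_eq_abs, abs_of_pos (hpos s hs).1, Circle.norm_coe, mul_one]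
    have habs2 : ‖(ρ₂ s : ℂ) * w₂‖ = ρ₂ s := by
      rw [norm_mul, Complex.norm_real, Real.norm_eq_abs, abs_of_pos (hpos s hs).2.1, Circle.norm_coe, mul_one]
    refine Prod.ext ?_ (Prod.ext ?_ ?_)
    · apply Circle.ext
      show (Φ (w₁, w₂, ⟨s, hs⟩) 0) / (‖Φ (w₁, w₂, ⟨s, hs⟩) 0‖ : ℂ) = (w₁ : ℂ)
      simp only [hΦ, Matrix.cons_val_zero]
      rw [habs1]
      exact mul_div_cancel_left₀ _ (Complex.ofReal_ne_zero.2 (hpos s hs).1.ne')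
    · apply Circle.ext
      show (Φ (w₁, w₂, ⟨s, hs⟩) 1) / (‖Φ (w₁, w₂, ⟨s, hs⟩) 1‖ : ℂ) = (w₂ : ℂ)
      simp only [hΦ, Matrix.cons_val_one, Matrix.cons_val_zero, Matrix.head_cons]
      rw [habs2]
      exact mul_div_cancel_left₀ _ (Complex.ofReal_ne_zero.2 (hpos s hs).2.1.ne')
    · apply Subtype.ext
      exact key (w₁, w₂, ⟨s, hs⟩)
  have hembed : Topology.IsEmbedding Φ := by
    have h1 : Topology.IsEmbedding (Set.codRestrict Φ (wallSet δ) hmem) :=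
      Function.LeftInverse.isEmbedding hli (wallInv_continuous δ hδπ.le)
        (hcont.codRestrict hmem)
    exact Topology.IsEmbedding.subtypeVal.comp h1
  refine ⟨hembed, ?_⟩
  rintro z ⟨⟨w₁, w₂, s, hs⟩, rfl⟩
  show ∑ i, ‖Φ (w₁, w₂, ⟨s, hs⟩) i‖ ^ 2 = 1
  have habs3 : ‖(ρ₃ s : ℂ) * Complex.exp (Complex.I * (s : ℂ)) *
      ((w₁ : ℂ) * (w₂ : ℂ))⁻¹‖ = ρ₃ s := by
    rw [norm_mul, norm_mul, Complex.norm_real, Real.norm_eq_abs, abs_of_pos (hpos s hs).2.2, norm_inv,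
      norm_mul, Circle.norm_coe, Circle.norm_coe, Complex.norm_exp]
    norm_num
  rw [Fin.sum_univ_three]
  simp only [hΦ, Matrix.cons_val_zero, Matrix.cons_val_one, Matrix.head_cons,
    Matrix.cons_val_two, Matrix.tail_cons]
  rw [habs3, norm_mul, Complex.norm_real, Real.norm_eq_abs, abs_of_pos (hpos s hs).1, Circle.norm_coe,
    norm_mul, Complex.norm_real, Real.norm_eq_abs, abs_of_pos (hpos s hs).2.1, Circle.norm_coe]
  simpa using hsum s hs
end

section
/- Let x : (0, δ) → ℝ with 0 < x(s) < 1 for all s ∈ (0, δ) (namely x(s) = φ₁(u(s))), define r₁(s) = √((1 + 2x(s))/3) and ρ(s) = √((1 − x(s))/3), and let F : (0, δ) → ℝ be a differentiable function with F'(s) = (x(s) − 1)/(3·x(s)) for all s. Assume x is differentiable. Define Ψ : (0, δ) × ℝ → ℂ³ by Ψ(s, θ) = (r₁(s)·e^{iF(s)}, ρ(s)·e^{iθ}, ρ(s)·e^{i(s − F(s) − θ)}). Then: (a) |Ψ₁(s,θ)|² + |Ψ₂(s,θ)|² + |Ψ₃(s,θ)|² = 1 for all (s, θ); and (b) the surface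 Ψ is Legendrian for the standard contact form, i.e., Σ_{i=1}^{3} Im( conj(Ψᵢ) · ∂Ψᵢ/∂s ) = 0 and Σ_{i=1}^{3} Im( conj(Ψᵢ) · ∂Ψᵢ/∂θ ) = 0 at every point (s, θ). -/
lemma conjE_mul_E (t : ℝ) :
    (starRingEnd ℂ) (Complex.exp (Complex.I * (t : ℂ))) * Complex.exp (Complex.I * (t : ℂ)) = 1 := by
  rw [← Complex.exp_conj, ← Complex.exp_add]
  simp [Complex.conj_I]

lemma im_term (a b c t : ℝ) :
    ((starRingEnd ℂ) ((a : ℂ) * Complex.exp (Complex.I * (t : ℂ))) *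
      (((b : ℂ) + (a : ℂ) * (Complex.I * (c : ℂ))) * Complex.exp (Complex.I * (t : ℂ)))).im
      = a ^ 2 * c := by
  have h : (starRingEnd ℂ) ((a : ℂ) * Complex.exp (Complex.I * (t : ℂ))) *
      (((b : ℂ) + (a : ℂ) * (Complex.I * (c : ℂ))) * Complex.exp (Complex.I * (t : ℂ)))
      = ((a : ℂ) * ((b : ℂ) + (a : ℂ) * (Complex.I * (c : ℂ)))) *
        ((starRingEnd ℂ) (Complex.exp (Complex.I * (t : ℂ))) * Complex.exp (Complex.I * (t : ℂ))) := by
    rw [map_mul, Complex.conj_ofReal]; ring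
  rw [h, conjE_mul_E, mul_one]
  simp [Complex.mul_im, Complex.mul_re, Complex.add_im, Complex.add_re]
  ring

/-- The surfaces of revolution `Ψ(s, θ) = (r₁(s)e^{iF(s)}, ρ(s)e^{iθ}, ρ(s)e^{i(s-F(s)-θ)})`,
with `r₁ = √((1+2x)/3)`, `ρ = √((1-x)/3)` and `F' = (x-1)/(3x)`, lie on the unit
sphere `S⁵` and are Legendrian for the standard contact form: both
`Σᵢ Im(conj Ψᵢ · ∂Ψᵢ/∂s)` and `Σᵢ Im(conj Ψᵢ · ∂Ψᵢ/∂θ)` vanish. -/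
theorem reeb_leaf_is_legendrian
    (δ : ℝ) (hδ : 0 < δ) (hδπ : δ < Real.pi)
    (x : ℝ → ℝ) (hx : ∀ s ∈ Set.Ioo (0 : ℝ) δ, 0 < x s ∧ x s < 1)
    (hxdiff : ∀ s ∈ Set.Ioo (0 : ℝ) δ, DifferentiableAt ℝ x s)
    (F : ℝ → ℝ) (hF : ∀ s ∈ Set.Ioo (0 : ℝ) δ, HasDerivAt F ((x s - 1) / (3 * x s)) s)
    (r₁ ρ : ℝ → ℝ)
    (hr₁ : ∀ s : ℝ, r₁ s = Real.sqrt ((1 + 2 * x s) / 3))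
    (hρ : ∀ s : ℝ, ρ s = Real.sqrt ((1 - x s) / 3))
    (Ψ : ℝ → ℝ → (Fin 3 → ℂ))
    (hΨ : ∀ s θ : ℝ, Ψ s θ =
      ![(r₁ s : ℂ) * Complex.exp (Complex.I * (F s : ℝ)),
        (ρ s : ℂ) * Complex.exp (Complex.I * θ),
        (ρ s : ℂ) * Complex.exp (Complex.I * ((s - F s - θ : ℝ)))]) :
    ∀ s ∈ Set.Ioo (0 : ℝ) δ, ∀ θ : ℝ,
      (∑ i, ‖Ψ s θ i‖ ^ 2 = 1) ∧
      (∑ i, ((starRingEnd ℂ) (Ψ s θ i) * deriv (fun s' => Ψ s' θ i) s).im = 0) ∧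
      (∑ i, ((starRingEnd ℂ) (Ψ s θ i) * deriv (fun θ' => Ψ s θ' i) θ).im = 0) := by
  intro s hs θ
  obtain ⟨hx0, hx1⟩ := hx s hs
  have ha : (0 : ℝ) < (1 + 2 * x s) / 3 := by linarith
  have hb : (0 : ℝ) < (1 - x s) / 3 := by linarith
  have hr₁s : r₁ s ^ 2 = (1 + 2 * x s) / 3 := by rw [hr₁, Real.sq_sqrt ha.le]
  have hρs : ρ s ^ 2 = (1 - x s) / 3 := by rw [hρ, Real.sq_sqrt hb.le]
  have hr₁0 : 0 ≤ r₁ s := by rw [hr₁]; exact Real.sqrt_nonneg _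
  have hρ0 : 0 ≤ ρ s := by rw [hρ]; exact Real.sqrt_nonneg _
  -- derivative setup
  set F' : ℝ := (x s - 1) / (3 * x s) with hF'def
  have hFd : HasDerivAt F F' s := hF s hs
  have hxd : HasDerivAt x (deriv x s) s := (hxdiff s hs).hasDerivAt
  set x' := deriv x s
  -- r₁ and ρ derivatives
  have h1 : HasDerivAt (fun s => (1 + 2 * x s) / 3) (2 * x' / 3) s := by
    simpa using ((hxd.const_mul 2).const_add 1).div_const 3
  have hr₁d : HasDerivAt r₁ (2 * x' / 3 / (2 * Real.sqrt ((1 + 2 * x s) / 3))) s := by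
    have := h1.sqrt ha.ne'
    have heq : r₁ = fun s => Real.sqrt ((1 + 2 * x s) / 3) := funext hr₁
    rw [heq]; exact this
  have h2 : HasDerivAt (fun s => (1 - x s) / 3) (-x' / 3) s := by
    simpa using ((hasDerivAt_const s (1:ℝ)).sub hxd).div_const 3
  have hρd : HasDerivAt ρ (-x' / 3 / (2 * Real.sqrt ((1 - x s) / 3))) s := by
    have := h2.sqrt hb.ne'
    have heq : ρ = fun s => Real.sqrt ((1 - x s) / 3) := funext hρ
    rw [heq]; exact this
  set r₁' := 2 * x' / 3 / (2 * Real.sqrt ((1 + 2 * x s) / 3))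
  set ρ' := -x' / 3 / (2 * Real.sqrt ((1 - x s) / 3))
  -- component functions in s
  have hc1 : (fun s' => Ψ s' θ 0) = fun s' => (r₁ s' : ℂ) * Complex.exp (Complex.I * (F s' : ℝ)) := by
    funext s'; rw [hΨ]; simp
  have hc2 : (fun s' => Ψ s' θ 1) = fun s' => (ρ s' : ℂ) * Complex.exp (Complex.I * (θ : ℝ)) := by
    funext s'; rw [hΨ]; simp
  have hc3 : (fun s' => Ψ s' θ 2) = fun s' => (ρ s' : ℂ) * Complex.exp (Complex.I * ((s' - F s' - θ : ℝ))) := by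
    funext s'; rw [hΨ]; simp
  -- s-derivatives
  have hd1 : HasDerivAt (fun s' => (r₁ s' : ℂ) * Complex.exp (Complex.I * (F s' : ℝ)))
      (((r₁' : ℂ) + (r₁ s : ℂ) * (Complex.I * (F' : ℂ))) * Complex.exp (Complex.I * (F s : ℝ))) s := by
    have hexp : HasDerivAt (fun s' => Complex.exp (Complex.I * (F s' : ℝ)))
        (Complex.I * (F' : ℂ) * Complex.exp (Complex.I * (F s : ℝ))) s := by
      simpa [mul_comm] using ((hFd.ofReal_comp).const_mul Complex.I).cexp
    have := (hr₁d.ofReal_comp).mul hexp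
    exact this.congr_deriv (by ring)
  have hd2 : HasDerivAt (fun s' => (ρ s' : ℂ) * Complex.exp (Complex.I * (θ : ℝ)))
      (((ρ' : ℂ) + (ρ s : ℂ) * (Complex.I * ((0:ℝ) : ℂ))) * Complex.exp (Complex.I * (θ : ℝ))) s := by
    have := (hρd.ofReal_comp).mul_const (Complex.exp (Complex.I * (θ : ℝ)))
    exact this.congr_deriv (by push_cast; ring)
  have hG : HasDerivAt (fun s' => s' - F s' - θ) (1 - F') s :=
    ((hasDerivAt_id s).sub hFd).sub_const θ
  have hd3 : HasDerivAt (fun s' => (ρ s' : ℂ) * Complex.exp (Complex.I * ((s' - F s' - θ : ℝ))))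
      (((ρ' : ℂ) + (ρ s : ℂ) * (Complex.I * ((1 - F' : ℝ) : ℂ))) * Complex.exp (Complex.I * ((s - F s - θ : ℝ)))) s := by
    have hexp : HasDerivAt (fun s' => Complex.exp (Complex.I * ((s' - F s' - θ : ℝ))))
        (Complex.I * ((1 - F' : ℝ) : ℂ) * Complex.exp (Complex.I * ((s - F s - θ : ℝ)))) s := by
      simpa [mul_comm] using ((hG.ofReal_comp).const_mul Complex.I).cexp
    have := (hρd.ofReal_comp).mul hexp
    exact this.congr_deriv (by ring)
  -- θ-direction component functions
  have ht1 : (fun θ' => Ψ s θ' 0) = fun _ => (r₁ s : ℂ) * Complex.exp (Complex.I * (F s : ℝ)) := by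
    funext θ'; rw [hΨ]; simp
  have ht2 : (fun θ' => Ψ s θ' 1) = fun θ' => (ρ s : ℂ) * Complex.exp (Complex.I * (θ' : ℝ)) := by
    funext θ'; rw [hΨ]; simp
  have ht3 : (fun θ' => Ψ s θ' 2) = fun θ' => (ρ s : ℂ) * Complex.exp (Complex.I * ((s - F s - θ' : ℝ))) := by
    funext θ'; rw [hΨ]; simp
  have he2 : HasDerivAt (fun θ' => (ρ s : ℂ) * Complex.exp (Complex.I * (θ' : ℝ)))
      ((((0:ℝ) : ℂ) + (ρ s : ℂ) * (Complex.I * ((1:ℝ) : ℂ))) * Complex.exp (Complex.I * (θ : ℝ))) θ := by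
    have hexp : HasDerivAt (fun θ' : ℝ => Complex.exp (Complex.I * (θ' : ℝ)))
        (Complex.I * Complex.exp (Complex.I * (θ : ℝ))) θ := by
      simpa [mul_comm] using (((hasDerivAt_id θ).ofReal_comp).const_mul Complex.I).cexp
    have := hexp.const_mul ((ρ s : ℂ))
    exact this.congr_deriv (by push_cast; ring)
  have hH : HasDerivAt (fun θ' : ℝ => s - F s - θ') (-1 : ℝ) θ := by
    exact ((hasDerivAt_const θ (s - F s)).sub (hasDerivAt_id θ)).congr_deriv (by norm_num)
  have he3 : HasDerivAt (fun θ' => (ρ s : ℂ) * Complex.exp (Complex.I * ((s - F s - θ' : ℝ))))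
      ((((0:ℝ) : ℂ) + (ρ s : ℂ) * (Complex.I * ((-1:ℝ) : ℂ))) * Complex.exp (Complex.I * ((s - F s - θ : ℝ)))) θ := by
    have hexp : HasDerivAt (fun θ' : ℝ => Complex.exp (Complex.I * ((s - F s - θ' : ℝ))))
        (Complex.I * ((-1:ℝ) : ℂ) * Complex.exp (Complex.I * ((s - F s - θ : ℝ)))) θ := by
      simpa [mul_comm] using ((hH.ofReal_comp).const_mul Complex.I).cexp
    have := hexp.const_mul ((ρ s : ℂ))
    exact this.congr_deriv (by push_cast; ring)
  refine ⟨?_, ?_, ?_⟩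
  · rw [Fin.sum_univ_three, hΨ]
    simp only [Matrix.cons_val_zero, Matrix.cons_val_one, Matrix.head_cons,
      Matrix.cons_val_two, Matrix.tail_cons, norm_mul, Complex.norm_exp, Complex.norm_real, Real.norm_eq_abs]
    simp only [Complex.mul_re, Complex.I_re, Complex.ofReal_im, Complex.I_im, Complex.ofReal_re]
    rw [abs_of_nonneg hr₁0, abs_of_nonneg hρ0]
    simp only [mul_pow, mul_one]
    rw [hr₁s, hρs]
    norm_num
    ring
  · rw [Fin.sum_univ_three, hc1, hc2, hc3, hd1.deriv, hd2.deriv, hd3.deriv, hΨ]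
    simp only [Matrix.cons_val_zero, Matrix.cons_val_one, Matrix.head_cons,
      Matrix.cons_val_two, Matrix.tail_cons]
    rw [im_term (r₁ s) r₁' F' (F s), im_term (ρ s) ρ' 0 θ, im_term (ρ s) ρ' (1 - F') (s - F s - θ)]
    rw [hr₁s, hρs, hF'def]
    field_simp
    ring
  · rw [Fin.sum_univ_three, ht1, ht2, ht3, he2.deriv, he3.deriv, deriv_const]
    rw [hΨ]
    simp only [Matrix.cons_val_zero, Matrix.cons_val_one, Matrix.head_cons,
      Matrix.cons_val_two, Matrix.tail_cons]
    rw [im_term (ρ s) 0 1 θ, im_term (ρ s) 0 (-1) (s - F s - θ)]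
    simp
end

section
/- Let x(s) = φ₁(u(s)), which is smooth on (−δ, δ), zero on (−δ, 0], and positive on (0, δ). Define G : (0, δ/2] → ℝ by G(s) = ∫_s^{δ/2} (1 − x(σ))/(3·x(σ)) dσ. Then G(s) tends to +∞ as s → 0⁺ (i.e., Tendsto G (𝓝[>] 0) atTop). (Hence the Legendrian leaves of the foliation on M₁³ spiral infinitely many times toward the torus T, producing Reeb components.) -/
open Topology

/-- With `x s = φ₁ (u s)` (smooth, zero on `(-δ, 0]`, positive on `(0, δ)`), the
function `G s = ∫_s^{δ/2} (1 - x σ)/(3 x σ) dσ` tends to `+∞` as `s → 0⁺`: the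
Legendrian leaves spiral infinitely many times toward the torus `T`. -/
theorem leaves_spiral_to_torus
    (δ : ℝ) (hδ : 0 < δ) (hδπ : δ < Real.pi)
    (φ₁ : ℝ → ℝ) (hφ₁ : ContDiff ℝ (⊤ : ℕ∞) φ₁)
    (hφ₁0 : ∀ v : ℝ, v ≤ 0 → φ₁ v = 0)
    (hφ₁' : ∀ v : ℝ, 0 < v → v ≤ 1 → 0 < deriv φ₁ v)
    (hφ₁eq : ∀ v : ℝ, 1/2 ≤ v → v ≤ 1 → φ₁ v = (1 + v) / 2)
    (u : ℝ → ℝ) (hu : ContDiffOn ℝ (⊤ : ℕ∞) u (Set.Ioo (-δ) δ))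
    (huodd : ∀ s ∈ Set.Ioo (-δ) δ, u (-s) = -u s)
    (hubij : Set.BijOn u (Set.Ioo (-δ) δ) (Set.Ioo (-1 : ℝ) 1))
    (hu' : ∀ s ∈ Set.Ioo (-δ) δ, 0 < deriv u s) :
    Filter.Tendsto
      (fun s : ℝ => ∫ σ in s..(δ / 2), (1 - φ₁ (u σ)) / (3 * φ₁ (u σ)))
      (𝓝[>] 0) Filter.atTop := by
  have hδ2 : 0 < δ / 2 := by linarith
  have hsubI : Set.Icc (0 : ℝ) (δ / 2) ⊆ Set.Ioo (-δ) δ := fun t ht =>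
    ⟨by linarith [ht.1], by linarith [ht.2]⟩
  have h0I : (0 : ℝ) ∈ Set.Ioo (-δ) δ := ⟨by linarith, hδ⟩
  have hu0 : u 0 = 0 := by
    have h := huodd 0 h0I
    simp only [neg_zero] at h
    linarith
  have humono : StrictMonoOn u (Set.Ioo (-δ) δ) :=
    strictMonoOn_of_deriv_pos (convex_Ioo _ _) hu.continuousOn
      (fun s hs => hu' s (by rwa [interior_Ioo] at hs))
  have hφmono : StrictMonoOn φ₁ (Set.Icc (0 : ℝ) 1) :=
    strictMonoOn_of_deriv_pos (convex_Icc _ _) hφ₁.continuous.continuousOn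
      (fun v hv => by
        rw [interior_Icc] at hv
        exact hφ₁' v hv.1 hv.2.le)
  have hφ₁z : φ₁ 0 = 0 := hφ₁0 0 le_rfl
  have hupos : ∀ σ ∈ Set.Ioc (0 : ℝ) (δ / 2), 0 < u σ ∧ u σ < 1 := by
    intro σ hσ
    have hσI : σ ∈ Set.Ioo (-δ) δ := ⟨by linarith [hσ.1], by linarith [hσ.2]⟩
    have h := humono h0I hσI hσ.1
    exact ⟨by rwa [hu0] at h, (hubij.mapsTo hσI).2⟩
  have hxpos : ∀ σ ∈ Set.Ioc (0 : ℝ) (δ / 2), 0 < φ₁ (u σ) := by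
    intro σ hσ
    obtain ⟨h1, h2⟩ := hupos σ hσ
    have h := hφmono (Set.left_mem_Icc.2 zero_le_one) ⟨h1.le, h2.le⟩ h1
    rwa [hφ₁z] at h
  have hxcont : ContinuousOn (fun σ => φ₁ (u σ)) (Set.Ioo (-δ) δ) :=
    hφ₁.continuous.comp_continuousOn hu.continuousOn
  -- continuity / integrability of the integrand on compacts in (0, δ/2]
  have hfc : ∀ {a b : ℝ}, 0 < a → b ≤ δ / 2 →
      ContinuousOn (fun σ => (1 - φ₁ (u σ)) / (3 * φ₁ (u σ))) (Set.Icc a b) := by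
    intro a b ha hb
    have hsub : Set.Icc a b ⊆ Set.Ioc 0 (δ / 2) := fun t ht =>
      ⟨lt_of_lt_of_le ha ht.1, le_trans ht.2 hb⟩
    have hsub' : Set.Icc a b ⊆ Set.Ioo (-δ) δ := fun t ht =>
      hsubI ⟨(hsub ht).1.le, (hsub ht).2⟩
    exact (continuousOn_const.sub (hxcont.mono hsub')).div
      (continuousOn_const.mul (hxcont.mono hsub'))
      (fun t ht => by
        have := hxpos t (hsub ht)
        positivity)
  -- bound `φ₁ v ≤ M v` on `[0,1]`
  have hφd : Continuous (deriv φ₁) := hφ₁.continuous_deriv (by exact_mod_cast le_top)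
  obtain ⟨M₀, hM₀⟩ := (isCompact_Icc : IsCompact (Set.Icc (0 : ℝ) 1)).exists_bound_of_continuousOn
    hφd.continuousOn
  set M : ℝ := max M₀ 1 with hMdef
  have hM1 : (1 : ℝ) ≤ M := le_max_right _ _
  have hMpos : 0 < M := lt_of_lt_of_le one_pos hM1
  have hφlip : ∀ v ∈ Set.Icc (0 : ℝ) 1, φ₁ v ≤ M * v := by
    intro v hv
    have h := norm_image_sub_le_of_norm_deriv_le_segment' (f := φ₁) (f' := deriv φ₁)
      (a := 0) (b := 1) (C := M)
      (fun t _ => (hφ₁.differentiable (by simp) t).hasDerivAt.hasDerivWithinAt)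
      (fun t ht => le_trans (hM₀ t (Set.Ico_subset_Icc_self ht)) (le_max_left _ _)) v hv
    rw [hφ₁z, sub_zero, sub_zero, Real.norm_eq_abs] at h
    exact le_trans (le_abs_self _) h
  -- bound `u σ ≤ K σ` on `[0, δ/2]`
  have hud : ContinuousOn (deriv u) (Set.Ioo (-δ) δ) :=
    hu.continuousOn_deriv_of_isOpen isOpen_Ioo (by exact_mod_cast le_top)
  obtain ⟨K₀, hK₀⟩ := (isCompact_Icc : IsCompact (Set.Icc (0 : ℝ) (δ / 2))).exists_bound_of_continuousOn
    (hud.mono hsubI)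
  set K : ℝ := max K₀ 1 with hKdef
  have hK1 : (1 : ℝ) ≤ K := le_max_right _ _
  have hKpos : 0 < K := lt_of_lt_of_le one_pos hK1
  have hudiff : DifferentiableOn ℝ u (Set.Ioo (-δ) δ) := hu.differentiableOn (by simp)
  have hulip : ∀ σ ∈ Set.Icc (0 : ℝ) (δ / 2), u σ ≤ K * σ := by
    intro σ hσ
    have h := norm_image_sub_le_of_norm_deriv_le_segment' (f := u) (f' := deriv u)
      (a := 0) (b := δ / 2) (C := K)
      (fun t ht => (((hudiff t (hsubI ht)).differentiableAt
        (isOpen_Ioo.mem_nhds (hsubI ht))).hasDerivAt).hasDerivWithinAt)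
      (fun t ht => le_trans (hK₀ t (Set.Ico_subset_Icc_self ht)) (le_max_left _ _)) σ hσ
    rw [hu0, sub_zero, sub_zero, Real.norm_eq_abs] at h
    exact le_trans (le_abs_self _) h
  set c : ℝ := M * K with hcdef
  have hcpos : 0 < c := mul_pos hMpos hKpos
  have hxle : ∀ σ ∈ Set.Ioc (0 : ℝ) (δ / 2), φ₁ (u σ) ≤ c * σ := by
    intro σ hσ
    obtain ⟨h1, h2⟩ := hupos σ hσ
    have h3 := hφlip (u σ) ⟨h1.le, h2.le⟩
    have h4 := hulip σ ⟨hσ.1.le, hσ.2⟩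
    calc φ₁ (u σ) ≤ M * u σ := h3
      _ ≤ M * (K * σ) := by nlinarith
      _ = c * σ := by rw [hcdef]; ring
  set s₀ : ℝ := min (δ / 2) (1 / (2 * c)) with hs₀def
  have hs₀pos : 0 < s₀ := lt_min hδ2 (by positivity)
  have hs₀le : s₀ ≤ δ / 2 := min_le_left _ _
  have hs₀le' : c * s₀ ≤ 1 / 2 := by
    have h := min_le_right (δ / 2) (1 / (2 * c))
    calc c * s₀ ≤ c * (1 / (2 * c)) := by
          exact mul_le_mul_of_nonneg_left h hcpos.le
      _ = 1 / 2 := by field_simp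
  -- pointwise lower bound for the integrand on (0, s₀]
  have hbound : ∀ σ ∈ Set.Ioc (0 : ℝ) s₀,
      (1 / (6 * c)) * (1 / σ) ≤ (1 - φ₁ (u σ)) / (3 * φ₁ (u σ)) := by
    intro σ hσ
    have hσδ : σ ∈ Set.Ioc (0 : ℝ) (δ / 2) := ⟨hσ.1, le_trans hσ.2 hs₀le⟩
    have h1 := hxpos σ hσδ
    have h2 := hxle σ hσδ
    have h3 : c * σ ≤ 1 / 2 := le_trans
      (mul_le_mul_of_nonneg_left hσ.2 hcpos.le) hs₀le'
    have hσpos := hσ.1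
    have heq : (1 / (6 * c)) * (1 / σ) = 1 / (6 * c * σ) := by
      field_simp
    rw [heq, div_le_div_iff₀ (by positivity) (by positivity)]
    nlinarith [mul_nonneg (by linarith : (0:ℝ) ≤ 1/2 - φ₁ (u σ)) (by positivity : (0:ℝ) ≤ 6 * c * σ)]
  -- the lower bounding function tends to atTop
  have hlogtop : Filter.Tendsto (fun s : ℝ => (1 / (6 * c)) * (Real.log s₀ - Real.log s)
      + ∫ σ in s₀..(δ / 2), (1 - φ₁ (u σ)) / (3 * φ₁ (u σ))) (𝓝[>] 0) Filter.atTop := by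
    apply Filter.tendsto_atTop_add_const_right
    apply Filter.Tendsto.const_mul_atTop (by positivity : (0:ℝ) < 1 / (6 * c))
    have h1 : Filter.Tendsto (fun s : ℝ => -Real.log s) (𝓝[>] 0) Filter.atTop :=
      Filter.tendsto_neg_atTop_iff.mpr Real.tendsto_log_nhdsGT_zero
    have h2 := Filter.tendsto_atTop_add_const_left (𝓝[>] (0:ℝ)) (Real.log s₀) h1
    exact h2.congr (fun s => (sub_eq_add_neg _ _).symm)
  refine Filter.tendsto_atTop_mono' _ ?_ hlogtop
  filter_upwards [Ioo_mem_nhdsGT_of_mem (Set.left_mem_Ico.2 hs₀pos)] with s hs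
  obtain ⟨hs1, hs2⟩ := hs
  -- integrability
  have hI1 : IntervalIntegrable (fun σ => (1 - φ₁ (u σ)) / (3 * φ₁ (u σ))) MeasureTheory.volume s s₀ :=
    (hfc hs1 hs₀le).intervalIntegrable_of_Icc hs2.le
  have hI2 : IntervalIntegrable (fun σ => (1 - φ₁ (u σ)) / (3 * φ₁ (u σ))) MeasureTheory.volume s₀ (δ / 2) :=
    (hfc hs₀pos le_rfl).intervalIntegrable_of_Icc hs₀le
  have hg : IntervalIntegrable (fun σ : ℝ => (1 / (6 * c)) * (1 / σ)) MeasureTheory.volume s s₀ := by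
    apply ContinuousOn.intervalIntegrable_of_Icc hs2.le
    exact continuousOn_const.mul (continuousOn_const.div continuousOn_id
      (fun t ht => ne_of_gt (lt_of_lt_of_le hs1 ht.1)))
  have hmono := intervalIntegral.integral_mono_on hs2.le hg hI1
    (fun t ht => hbound t ⟨lt_of_lt_of_le hs1 ht.1, ht.2⟩)
  have hsplit := intervalIntegral.integral_add_adjacent_intervals hI1 hI2
  have hval : (∫ σ in s..s₀, (1 / (6 * c)) * (1 / σ))
      = (1 / (6 * c)) * (Real.log s₀ - Real.log s) := by
    rw [intervalIntegral.integral_const_mul, integral_one_div_of_pos hs1 hs₀pos,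
      Real.log_div (ne_of_gt hs₀pos) (ne_of_gt hs1)]
  rw [hval] at hmono
  linarith [hmono, hsplit]
end
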